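/- Let Ω ∈ (0,1) be a quadratic irrational with purely periodic continued fraction, associated matrices T = [[a,b],[c,d]], U, and eigenvalue λ > 1. For any primitive integer q, the numerators along the resonant sequence satisfy γ_{s(q,n)} = γ*_q + O(λ^{−2n}) as n → ∞ (in particular γ_{s(q,n)} → γ*_q), where γ*_q = |r_q|·K_q with r_q = qΩ − p, z_q = cq + bpΩ, K_q = |z_q|(1+Ω)/|c+bΩ²|, and p = p⁰(q). -/

import Mathlib

open Real Filter Matrix

noncomputable section

/-- Orbit of the Gauss map `g(x) = {1/x}` starting at `Ω`:
`x₀ = Ω`, `x_{j+1} = g(x_j)`. -/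
def gaussOrbit (Ω : ℝ) : ℕ → ℝ
  | 0 => Ω
  | j + 1 => Int.fract (1 / gaussOrbit Ω j)

/-- `cfA Ω j` is the partial quotient `a_{j+1}` of the continued fraction of `Ω`. -/
def cfA (Ω : ℝ) (j : ℕ) : ℤ := ⌊1 / gaussOrbit Ω j⌋

/-- The matrix `[[a, 1], [1, 0]]`. -/
def Acf (a : ℤ) : Matrix (Fin 2) (Fin 2) ℤ := !![a, 1; 1, 0]

/-- The product `A₁ ⋯ A_m` with `A_i = [[a_i, 1], [1, 0]]`. -/
def cfMatProd (Ω : ℝ) (m : ℕ) : Matrix (Fin 2) (Fin 2) ℤ :=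
  ((List.range m).map fun i => Acf (cfA Ω i)).prod

/-- `cfQ Ω (j+1) = q_j`:  `q₋₁ = 0`, `q₀ = 1`, `q_j = a_j q_{j-1} + q_{j-2}`. -/
def cfQ (Ω : ℝ) : ℕ → ℤ
  | 0 => 0
  | 1 => 1
  | j + 2 => cfA Ω j * cfQ Ω (j + 1) + cfQ Ω j

/-- `cfP Ω (j+1) = p_j`:  `p₋₁ = 1`, `p₀ = 0`, `p_j = a_j p_{j-1} + p_{j-2}`. -/
def cfP (Ω : ℝ) : ℕ → ℤ
  | 0 => 1
  | 1 => 0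
  | j + 2 => cfA Ω j * cfP Ω (j + 1) + cfP Ω j

/-- The vector convergent `w(j) = (q_j, p_j)`. -/
def wconv (Ω : ℝ) (j : ℕ) : Fin 2 → ℤ := ![cfQ Ω (j + 1), cfP Ω (j + 1)]

/-- The resonant convergent `v(j) = (−p_j, q_j)`. -/
def vconv (Ω : ℝ) (j : ℕ) : Fin 2 → ℤ := ![-cfP Ω (j + 1), cfQ Ω (j + 1)]

/-- A quadratic irrational number. -/
def IsQuadraticIrrational (Ω : ℝ) : Prop :=
  Irrational Ω ∧ ∃ A B C : ℤ, A ≠ 0 ∧ (A : ℝ) * Ω ^ 2 + (B : ℝ) * Ω + (C : ℝ) = 0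

end
noncomputable section

/-- `⟨k, ω⟩ = k₁ + k₂ Ω` for `ω = (1, Ω)`. -/
def pairω (Ω : ℝ) (k : Fin 2 → ℤ) : ℝ := (k 0 : ℝ) + (k 1 : ℝ) * Ω

/-- `|k|₁ = |k₁| + |k₂|`. -/
def norm1 (k : Fin 2 → ℤ) : ℤ := |k 0| + |k 1|

/-- `p⁰(q)`: the integer nearest to `qΩ`. -/
def p0 (Ω : ℝ) (q : ℤ) : ℤ := round ((q : ℝ) * Ω)

/-- `k⁰(q) = (−p⁰(q), q)`. -/
def kzero (Ω : ℝ) (q : ℤ) : Fin 2 → ℤ := ![-p0 Ω q, q]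

/-- The set `A` of quasi-resonances: vectors `k⁰(q)`, `q ≥ 1`, with `|⟨k,ω⟩| < 1/2`. -/
def inA (Ω : ℝ) (k : Fin 2 → ℤ) : Prop :=
  ∃ q : ℤ, 1 ≤ q ∧ k = kzero Ω q ∧ |pairω Ω k| < 1 / 2

/-- A quasi-resonance `k` is primitive if `U⁻¹k` is not a quasi-resonance. -/
def PrimitiveVec (Ω : ℝ) (U : Matrix (Fin 2) (Fin 2) ℤ) (k : Fin 2 → ℤ) : Prop :=
  inA Ω k ∧ ¬inA Ω (U⁻¹.mulVec k)

/-- A primitive integer `q ≥ 1`. -/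
def PrimitiveInt (Ω : ℝ) (U : Matrix (Fin 2) (Fin 2) ℤ) (q : ℤ) : Prop :=
  1 ≤ q ∧ PrimitiveVec Ω U (kzero Ω q)

/-- The resonant sequence `s(q, n) = Uⁿ k⁰(q)`. -/
def sres (Ω : ℝ) (U : Matrix (Fin 2) (Fin 2) ℤ) (q : ℤ) (n : ℕ) : Fin 2 → ℤ :=
  (U ^ n).mulVec (kzero Ω q)

/-- `U = σ (T⁻¹)ᵀ` with `σ = det T = (−1)^m` and `T = A₁⋯A_m`. -/
def Umat (Ω : ℝ) (m : ℕ) : Matrix (Fin 2) (Fin 2) ℤ :=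
  ((-1 : ℤ) ^ m) • ((cfMatProd Ω m)⁻¹)ᵀ

/-- The numerator `γ_k = |⟨k,ω⟩| · |k|₁`. -/
def gammaK (Ω : ℝ) (k : Fin 2 → ℤ) : ℝ := |pairω Ω k| * (norm1 k : ℝ)

/-- `K_q = |z_q|(1+Ω)/|c+bΩ²|`, where `z_q = cq + bpΩ`, `p = p⁰(q)`,
and `b, c` are the off-diagonal entries of `T = A₁⋯A_m = [[a,b],[c,d]]`. -/
def KqD (Ω : ℝ) (m : ℕ) (q : ℤ) : ℝ :=
  |(cfMatProd Ω m 1 0 : ℝ) * (q : ℝ) + (cfMatProd Ω m 0 1 : ℝ) * (p0 Ω q : ℝ) * Ω| * (1 + Ω) /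
    |(cfMatProd Ω m 1 0 : ℝ) + (cfMatProd Ω m 0 1 : ℝ) * Ω ^ 2|

/-- The limit numerator `γ*_q = |r_q| K_q` with `r_q = qΩ − p⁰(q)`. -/
def gammaStarQ (Ω : ℝ) (m : ℕ) (q : ℤ) : ℝ :=
  |(q : ℝ) * Ω - (p0 Ω q : ℝ)| * KqD Ω m q

end


/-!
Since `U = adj(T)ᵀ`, we have `⟨Uk, v⟩ = ⟨k, adj(T) v⟩`. Hence pairing with the eigenvector
`ω = (1, Ω)` of `T` is contracted, `⟨Uk, ω⟩ = (det T / λ) ⟨k, ω⟩`, while pairing with its second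
eigenvector `ω̄ = (1, Ω̄)` is expanded, `⟨Uk, ω̄⟩ = λ ⟨k, ω̄⟩`. As `Ω ≠ Ω̄`, the two pairings
determine `k`, and solving for its coordinates gives
`|Uⁿk|₁ = λⁿ |⟨k, ω̄⟩| (1 + Ω) / |Ω - Ω̄| + O(λ⁻ⁿ)`. Multiplying by `|⟨Uⁿk, ω⟩| = λ⁻ⁿ |⟨k, ω⟩|`
gives `γ_{Uⁿk} = |⟨k, ω⟩| |⟨k, ω̄⟩| (1 + Ω) / |Ω - Ω̄| + O(λ⁻²ⁿ)`, and this constant is `γ*_q`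
once it is written out in the entries of `T`.
-/

lemma det_Acf (a : ℤ) : (Acf a).det = -1 := by
  simp [Acf, det_fin_two_of]

lemma cfMatProd_succ (Ω : ℝ) (m : ℕ) :
    cfMatProd Ω (m + 1) = cfMatProd Ω m * Acf (cfA Ω m) := by
  simp [cfMatProd, List.range_succ]

lemma det_cfMatProd (Ω : ℝ) (m : ℕ) : (cfMatProd Ω m).det = (-1) ^ m := by
  induction m with
  | zero => simp [cfMatProd]
  | succ n ih => rw [cfMatProd_succ, det_mul, ih, det_Acf, pow_succ]

lemma Umat_eq_adjugate_transpose (Ω : ℝ) (m : ℕ) : Umat Ω m = (cfMatProd Ω m).adjugateᵀ := by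
  have hsq : ((-1 : ℤ) ^ m) * (-1) ^ m = 1 := by rw [← pow_add, Even.neg_one_pow ⟨m, rfl⟩]
  have hinv : (cfMatProd Ω m)⁻¹ = (-1 : ℤ) ^ m • (cfMatProd Ω m).adjugate := by
    apply inv_eq_right_inv
    rw [Matrix.mul_smul, mul_adjugate, det_cfMatProd, smul_smul, hsq, one_smul]
  rw [Umat, hinv, transpose_smul, smul_smul, hsq, one_smul]

lemma pairω_pow_mulVec {x r : ℝ} {U : Matrix (Fin 2) (Fin 2) ℤ}
    (hU : ∀ k, pairω x (U *ᵥ k) = r * pairω x k) (n : ℕ) (k : Fin 2 → ℤ) :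
    pairω x ((U ^ n) *ᵥ k) = r ^ n * pairω x k := by
  induction n with
  | zero => simp
  | succ n ih => rw [pow_succ', ← mulVec_mulVec, hU, ih, pow_succ']; ring

lemma norm1_eq_of_ne {x y : ℝ} (hxy : x ≠ y) (k : Fin 2 → ℤ) :
    (norm1 k : ℝ) = (|x * pairω y k - y * pairω x k| + |pairω x k - pairω y k|) / |x - y| := by
  have hd : x - y ≠ 0 := sub_ne_zero.mpr hxy
  have h0 : x * pairω y k - y * pairω x k = k 0 * (x - y) := by simp only [pairω]; ring
  have h1 : pairω x k - pairω y k = k 1 * (x - y) := by simp only [pairω]; ring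
  rw [h0, h1, abs_mul, abs_mul, ← add_mul, mul_div_cancel_right₀ _ (abs_ne_zero.mpr hd), norm1]
  push_cast
  rfl

section Eigen

variable {Ω lam : ℝ} {T : Matrix (Fin 2) (Fin 2) ℤ}

/-- The slope `Ω̄` of the second eigenvector `(1, Ω̄)` of `T` when `(1, Ω)` is one: the slopes are
the roots of `T 0 1 x² + (T 0 0 - T 1 1) x - T 1 0`, so `Ω Ω̄ = -T 1 0 / T 0 1`. -/
noncomputable def conjSlope (T : Matrix (Fin 2) (Fin 2) ℤ) (Ω : ℝ) : ℝ :=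
  -(T 1 0 : ℝ) / ((T 0 1 : ℝ) * Ω)

lemma eigenvector_eqs (hT : (T.map fun z : ℤ => (z : ℝ)) *ᵥ ![1, Ω] = lam • ![1, Ω]) :
    (T 0 0 : ℝ) + T 0 1 * Ω = lam ∧ (T 1 0 : ℝ) + T 1 1 * Ω = lam * Ω := by
  constructor
  · simpa [mulVec, dotProduct, Fin.sum_univ_two] using congrFun hT 0
  · simpa [mulVec, dotProduct, Fin.sum_univ_two] using congrFun hT 1

lemma pairω_adjugate_transpose_mulVec (k : Fin 2 → ℤ) (x : ℝ) :
    pairω x (T.adjugateᵀ *ᵥ k) = (T 1 1 - T 0 1 * x) * k 0 + (T 0 0 * x - T 1 0) * k 1 := by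
  simp only [pairω, mulVec, dotProduct, adjugate_fin_two, transpose_apply, of_apply, cons_val',
    cons_val_zero, cons_val_one, cons_val_fin_one, Fin.sum_univ_two, Int.cast_add, Int.cast_mul,
    Int.cast_neg]
  ring

variable (hT : (T.map fun z : ℤ => (z : ℝ)) *ᵥ ![1, Ω] = lam • ![1, Ω])
include hT

lemma pairω_adjugate_transpose_mulVec_of_eigen (hlam : lam ≠ 0) (k : Fin 2 → ℤ) :
    pairω Ω (T.adjugateᵀ *ᵥ k) = T.det / lam * pairω Ω k := by
  obtain ⟨e1, e2⟩ := eigenvector_eqs hT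
  rw [pairω_adjugate_transpose_mulVec, pairω, det_fin_two]
  push_cast
  field_simp
  linear_combination (T 1 0 * k 1 - T 1 1 * k 0 : ℝ) * e1 + (T 0 1 * k 0 - T 0 0 * k 1 : ℝ) * e2

lemma pairω_conjSlope_adjugate_transpose_mulVec_of_eigen (hΩ : Ω ≠ 0) (hb : T 0 1 ≠ 0)
    (k : Fin 2 → ℤ) :
    pairω (conjSlope T Ω) (T.adjugateᵀ *ᵥ k) = lam * pairω (conjSlope T Ω) k := by
  obtain ⟨e1, e2⟩ := eigenvector_eqs hT
  have hb' : (T 0 1 : ℝ) ≠ 0 := by exact_mod_cast hb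
  have hbΩ : (T 0 1 : ℝ) * conjSlope T Ω * Ω = -T 1 0 := by
    rw [conjSlope]; field_simp
  have hd : (T 1 1 : ℝ) - T 0 1 * conjSlope T Ω = lam := by
    apply mul_right_cancel₀ hΩ
    linear_combination e2 - hbΩ
  have ha : (T 0 0 : ℝ) * conjSlope T Ω - T 1 0 = lam * conjSlope T Ω := by
    linear_combination conjSlope T Ω * e1 - hbΩ
  rw [pairω_adjugate_transpose_mulVec, pairω, hd, ha]
  ring

lemma zero_one_ne_zero_of_eigen (hdet : IsUnit T.det) (hlam : 1 < lam) : T 0 1 ≠ 0 := by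
  intro hb
  obtain ⟨e1, -⟩ := eigenvector_eqs hT
  rw [det_fin_two, hb, zero_mul, sub_zero] at hdet
  have ha : |(T 0 0 : ℝ)| = 1 := by
    exact_mod_cast Int.isUnit_iff_abs_eq.mp (isUnit_of_mul_isUnit_left hdet)
  rw [hb, Int.cast_zero, zero_mul, add_zero] at e1
  rw [e1, abs_of_pos (by linarith)] at ha
  linarith

/-- Otherwise the two pairings would scale by `det T / λ` and by `λ` at once: `λ² = det T`. -/
lemma ne_conjSlope (hdet : IsUnit T.det) (hlam : 1 < lam) (hΩ : Ω ≠ 0) :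
    Ω ≠ conjSlope T Ω := by
  intro h
  have h₁ := pairω_adjugate_transpose_mulVec_of_eigen hT (by positivity) ![1, 0]
  have h₂ := pairω_conjSlope_adjugate_transpose_mulVec_of_eigen hT hΩ
    (zero_one_ne_zero_of_eigen hT hdet hlam) ![1, 0]
  rw [← h, h₁] at h₂
  simp only [pairω, Matrix.cons_val_zero, Matrix.cons_val_one, Int.cast_one, Int.cast_zero,
    zero_mul, add_zero, mul_one] at h₂
  have hsq : (T.det : ℝ) = lam ^ 2 := by field_simp at h₂; linarith
  have habs : |(T.det : ℝ)| = 1 := by exact_mod_cast Int.isUnit_iff_abs_eq.mp hdet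
  rw [hsq, abs_of_pos (by positivity)] at habs
  nlinarith

end Eigen

lemma gammaK_eq_of_ne {x y : ℝ} (hxy : x ≠ y) (k : Fin 2 → ℤ) :
    gammaK x k = |pairω x k| * (|x * pairω y k - y * pairω x k| + |pairω x k - pairω y k|) /
      |x - y| := by
  rw [gammaK, norm1_eq_of_ne hxy, mul_div_assoc]

lemma gammaStarQ_eq {Ω : ℝ} {m : ℕ} (hΩ : Ω ≠ 0) (hb : cfMatProd Ω m 0 1 ≠ 0) (q : ℤ) :
    gammaStarQ Ω m q = |pairω Ω (kzero Ω q)| *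
      (|pairω (conjSlope (cfMatProd Ω m) Ω) (kzero Ω q)| * (1 + Ω)) /
        |Ω - conjSlope (cfMatProd Ω m) Ω| := by
  set T := cfMatProd Ω m
  have hbΩ : (T 0 1 : ℝ) * Ω ≠ 0 := mul_ne_zero (by exact_mod_cast hb) hΩ
  have hnum : (T 1 0 : ℝ) * q + T 0 1 * p0 Ω q * Ω =
      -(pairω (conjSlope T Ω) (kzero Ω q) * (T 0 1 * Ω)) := by
    simp only [pairω, kzero, conjSlope, Matrix.cons_val_zero, Matrix.cons_val_one]
    push_cast
    field_simp
    ring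
  have hden : (T 1 0 : ℝ) + T 0 1 * Ω ^ 2 = (Ω - conjSlope T Ω) * (T 0 1 * Ω) := by
    rw [conjSlope]
    field_simp
    ring
  have hr : (q : ℝ) * Ω - p0 Ω q = pairω Ω (kzero Ω q) := by
    simp only [pairω, kzero, Matrix.cons_val_zero, Matrix.cons_val_one]
    push_cast
    ring
  rw [gammaStarQ, KqD, hr, hnum, hden, abs_neg, abs_mul _ (_ * Ω), abs_mul (Ω - _),
    mul_right_comm _ |_ * Ω|, mul_div_mul_right _ _ (abs_ne_zero.mpr hbΩ)]
  ring

/-- Applied with `t = (det T / λ)ⁿ` and `L = λⁿ`, the factors by which `n` steps scale the two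
pairings. -/
lemma abs_pairing_norm_sub_le {Ω Ω' P Q t L : ℝ} (hΩ : 0 < Ω) (htL : |t * L| = 1) :
    |(|t * P| * (|Ω * (L * Q) - Ω' * (t * P)| + |t * P - L * Q|) - |P| * (|Q| * (1 + Ω)))|
      ≤ |P| ^ 2 * (|Ω'| + 1) * t ^ 2 := by
  have e₁ : |(|t| * |Ω * (L * Q) - Ω' * (t * P)| - Ω * |Q|)| ≤ |Ω'| * |P| * t ^ 2 := by
    have h₁ : |t| * |Ω * (L * Q) - Ω' * (t * P)| = |t * L * (Ω * Q) - Ω' * t ^ 2 * P| := by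
      rw [← abs_mul]; congr 1; ring
    have h₂ : Ω * |Q| = |t * L * (Ω * Q)| := by
      rw [abs_mul, htL, abs_mul, abs_of_pos hΩ, one_mul]
    calc _ = |(|t * L * (Ω * Q) - Ω' * t ^ 2 * P| - |t * L * (Ω * Q)|)| := by rw [h₁, h₂]
      _ ≤ |(t * L * (Ω * Q) - Ω' * t ^ 2 * P) - t * L * (Ω * Q)| := abs_abs_sub_abs_le_abs_sub _ _
      _ = |Ω'| * |P| * t ^ 2 := by
        rw [show (t * L * (Ω * Q) - Ω' * t ^ 2 * P) - t * L * (Ω * Q) = -(Ω' * P * t ^ 2) by ring,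
          abs_neg, abs_mul, abs_mul, abs_of_nonneg (sq_nonneg t)]
  have e₂ : |(|t| * |t * P - L * Q| - |Q|)| ≤ |P| * t ^ 2 := by
    have h₁ : |t| * |t * P - L * Q| = |t ^ 2 * P - t * L * Q| := by
      rw [← abs_mul]; congr 1; ring
    have h₂ : |Q| = |-(t * L * Q)| := by rw [abs_neg, abs_mul, htL, one_mul]
    calc _ = |(|t ^ 2 * P - t * L * Q| - |-(t * L * Q)|)| := by rw [h₁, ← h₂]
      _ ≤ |(t ^ 2 * P - t * L * Q) - -(t * L * Q)| := abs_abs_sub_abs_le_abs_sub _ _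
      _ = |P| * t ^ 2 := by
        rw [show (t ^ 2 * P - t * L * Q) - -(t * L * Q) = P * t ^ 2 by ring, abs_mul,
          abs_of_nonneg (sq_nonneg t)]
  have hsplit : |t * P| * (|Ω * (L * Q) - Ω' * (t * P)| + |t * P - L * Q|) - |P| * (|Q| * (1 + Ω))
      = |P| * ((|t| * |Ω * (L * Q) - Ω' * (t * P)| - Ω * |Q|) + (|t| * |t * P - L * Q| - |Q|)) := by
    rw [abs_mul]; ring
  rw [hsplit, abs_mul, abs_abs]
  calc _ ≤ |P| * (|Ω'| * |P| * t ^ 2 + |P| * t ^ 2) :=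
        mul_le_mul_of_nonneg_left ((abs_add_le _ _).trans (add_le_add e₁ e₂)) (abs_nonneg _)
    _ = |P| ^ 2 * (|Ω'| + 1) * t ^ 2 := by ring

lemma tendsto_of_abs_sub_le_mul_pow {f : ℕ → ℝ} {a C r : ℝ} (hr₀ : 0 ≤ r) (hr₁ : r < 1)
    (h : ∀ n, |f n - a| ≤ C * r ^ n) : Tendsto f atTop (nhds a) := by
  have hC : Tendsto (fun n : ℕ => C * r ^ n) atTop (nhds 0) := by
    simpa using (tendsto_pow_atTop_nhds_zero_of_lt_one hr₀ hr₁).const_mul C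
  exact tendsto_iff_norm_sub_tendsto_zero.mpr (squeeze_zero (fun _ => norm_nonneg _) h hC)

lemma abs_gammaK_sres_sub_gammaStarQ_le {Ω lam : ℝ} {m : ℕ} (hΩ : 0 < Ω) (hlam : 1 < lam)
    (heig : ((cfMatProd Ω m).map fun z : ℤ => (z : ℝ)).mulVec ![1, Ω] = lam • ![1, Ω])
    (q : ℤ) : ∃ C, 0 ≤ C ∧ ∀ n : ℕ,
      |gammaK Ω (sres Ω (Umat Ω m) q n) - gammaStarQ Ω m q| ≤ C * ((lam ^ 2)⁻¹) ^ n := by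
  set T := cfMatProd Ω m
  refine ⟨|pairω Ω (kzero Ω q)| ^ 2 * (|conjSlope T Ω| + 1) / |Ω - conjSlope T Ω|, by positivity,
    fun n => ?_⟩
  have hdet : IsUnit T.det := by rw [det_cfMatProd]; exact isUnit_one.neg.pow m
  have hdet' : |(T.det : ℝ)| = 1 := by exact_mod_cast Int.isUnit_iff_abs_eq.mp hdet
  have hb := zero_one_ne_zero_of_eigen heig hdet hlam
  have hP := pairω_pow_mulVec
    (pairω_adjugate_transpose_mulVec_of_eigen heig (by positivity)) n (kzero Ω q)
  have hQ := pairω_pow_mulVec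
    (pairω_conjSlope_adjugate_transpose_mulVec_of_eigen heig hΩ.ne' hb) n (kzero Ω q)
  have htL : |(T.det / lam) ^ n * lam ^ n| = 1 := by
    rw [← mul_pow, div_mul_cancel₀ _ (by positivity), abs_pow, hdet', one_pow]
  have ht : ((T.det / lam) ^ n) ^ 2 = ((lam ^ 2)⁻¹) ^ n := by
    rw [← sq_abs, abs_pow, abs_div, hdet', abs_of_pos (by positivity)]
    ring
  rw [gammaStarQ_eq hΩ.ne' hb, sres, Umat_eq_adjugate_transpose,
    gammaK_eq_of_ne (ne_conjSlope heig hdet hlam hΩ.ne'), hP, hQ, ← sub_div, abs_div, abs_abs,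
    div_mul_eq_mul_div, ← ht]
  exact div_le_div_of_nonneg_right (abs_pairing_norm_sub_le hΩ htL) (abs_nonneg _)

theorem splitting_quadratic_stmt8_general
    (Ω : ℝ) (m : ℕ) (h0 : 0 < Ω)
    (lam : ℝ) (hlam : 1 < lam)
    (heig : ((cfMatProd Ω m).map fun z : ℤ => (z : ℝ)).mulVec ![1, Ω] = lam • ![1, Ω])
    (q : ℤ) :
    (∃ C : ℝ, 0 < C ∧ ∀ n : ℕ,
      |gammaK Ω (sres Ω (Umat Ω m) q n) - gammaStarQ Ω m q| ≤ C * (lam ^ (2 * n))⁻¹) ∧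
    Filter.Tendsto (fun n : ℕ => gammaK Ω (sres Ω (Umat Ω m) q n)) Filter.atTop
      (nhds (gammaStarQ Ω m q)) := by
  obtain ⟨C, hC, hbound⟩ := abs_gammaK_sres_sub_gammaStarQ_le h0 hlam heig q
  have hr : (lam ^ 2)⁻¹ < 1 := inv_lt_one_of_one_lt₀ (one_lt_pow₀ hlam two_ne_zero)
  refine ⟨⟨C + 1, by positivity, fun n => ?_⟩,
    tendsto_of_abs_sub_le_mul_pow (by positivity) hr hbound⟩
  rw [pow_mul, ← inv_pow]
  exact (hbound n).trans (by gcongr; linarith)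

/-- Proposition 3(b): for a primitive `q`, the numerators along the resonant sequence
satisfy `γ_{s(q,n)} = γ*_q + O(λ^{−2n})`; in particular `γ_{s(q,n)} → γ*_q`. -/
theorem splitting_quadratic_stmt8
    (Ω : ℝ) (m : ℕ) (hm : 1 ≤ m) (h0 : 0 < Ω) (h1 : Ω < 1)
    (hquad : IsQuadraticIrrational Ω)
    (hper : gaussOrbit Ω m = Ω)
    (lam : ℝ) (hlam : 1 < lam)
    (heig : ((cfMatProd Ω m).map fun z : ℤ => (z : ℝ)).mulVec ![1, Ω] = lam • ![1, Ω])
    (q : ℤ) (hq : PrimitiveInt Ω (Umat Ω m) q) :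
    (∃ C : ℝ, 0 < C ∧ ∀ n : ℕ,
      |gammaK Ω (sres Ω (Umat Ω m) q n) - gammaStarQ Ω m q| ≤ C * (lam ^ (2 * n))⁻¹) ∧
    Filter.Tendsto (fun n : ℕ => gammaK Ω (sres Ω (Umat Ω m) q n)) Filter.atTop
      (nhds (gammaStarQ Ω m q)) :=
  splitting_quadratic_stmt8_general Ω m h0 lam hlam heig q
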